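/- There is a bijection between the set of pairs (T, occupied corner of T), with T a symmetric tree-like tableau of size 2n+1, and the set of triples (T', i, ρ) where T' is a symmetric tree-like tableau of size 2n-1, i ∈ {1,...,n}, and ρ ∈ {a,b}. -/

import Mathlib

open Polynomial

/-- A tree-like tableau: a Young diagram together with a set of pointed cells,
such that the top-left cell is pointed (the root point), every non-root point
has a point above it in its column or to its left in its row but not both,
and no row or column of the diagram is empty of points. Cells are indexed by
`(row, column)` with the top-left cell `(0,0)`. -/
structure TreeLikeTableau where
  shape : YoungDiagram
  points : Finset (ℕ × ℕ)
  points_subset : points ⊆ shape.cells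
  root_mem : (0, 0) ∈ points
  point_cond : ∀ p ∈ points, p ≠ (0, 0) →
    Xor' (∃ r < p.1, (r, p.2) ∈ points) (∃ c < p.2, (p.1, c) ∈ points)
  no_empty_row : ∀ i j : ℕ, (i, j) ∈ shape.cells → ∃ c, (i, c) ∈ points
  no_empty_col : ∀ i j : ℕ, (i, j) ∈ shape.cells → ∃ r, (r, j) ∈ points

namespace TreeLikeTableau

/-- The size of a tree-like tableau is its number of points. -/
def size (T : TreeLikeTableau) : ℕ := T.points.card

/-- The occupied corners of a tree-like tableau: pointed cells whose bottom
and right edges lie on the Southeast border of the diagram. -/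
def occCorners (T : TreeLikeTableau) : Finset (ℕ × ℕ) :=
  T.points.filter (fun p => (p.1 + 1, p.2) ∉ T.shape.cells ∧ (p.1, p.2 + 1) ∉ T.shape.cells)

/-- The number of occupied corners. -/
def oc (T : TreeLikeTableau) : ℕ := T.occCorners.card

end TreeLikeTableau

/-- A tree-like tableau is symmetric if it is invariant under reflection
across its main diagonal. -/
def TreeLikeTableau.IsSymmetric (T : TreeLikeTableau) : Prop :=
  T.shape.transpose = T.shape ∧ ∀ p : ℕ × ℕ, p ∈ T.points ↔ (p.2, p.1) ∈ T.points

/-!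
An off-diagonal occupied corner `(r, s)` of a symmetric tree-like tableau has a point above it or
to its left, but not both; accordingly either `(r, s)` or its mirror image `(s, r)` is the only
point of its row `j`, say at column `x`. Deleting row `j` and column `j` gives a symmetric
tree-like tableau with two points fewer, in which the row of the mirror point `(x, j)` becomes
row `t`.
Conversely, a symmetric tableau of size `2n - 1` has `n` rows, and for each row `t` inserting a row
and a column at `j = rowLen t`, with points at `(j, x)` and `(x, j)` where `x` is the new index of
row `t`, undoes the deletion. The side of the diagonal on which the original corner lies tells
which of the two mirror corners it was.
-/

namespace TreeLikeTableau

def succAbove (j a : ℕ) : ℕ := if a < j then a else a + 1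

def predAbove (j a : ℕ) : ℕ := if a < j then a else a - 1

section Shift

variable {j a b : ℕ}

lemma succAbove_ne (j a : ℕ) : succAbove j a ≠ j := by unfold succAbove; split_ifs <;> omega

lemma succAbove_of_lt (h : a < j) : succAbove j a = a := if_pos h

lemma predAbove_of_lt (h : a < j) : predAbove j a = a := if_pos h

lemma predAbove_succAbove (j a : ℕ) : predAbove j (succAbove j a) = a := by
  unfold succAbove predAbove; split_ifs <;> omega

lemma succAbove_predAbove (h : a ≠ j) : succAbove j (predAbove j a) = a := by
  unfold succAbove predAbove; split_ifs <;> omega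

lemma strictMono_succAbove (j : ℕ) : StrictMono (succAbove j) := by
  intro a b h; unfold succAbove; split_ifs <;> omega

lemma monotone_predAbove (j : ℕ) : Monotone (predAbove j) := by
  intro a b h; unfold predAbove; split_ifs <;> omega

lemma succAbove_lt_iff : succAbove j a < j ↔ a < j := by unfold succAbove; split_ifs <;> omega

lemma le_succAbove (j a : ℕ) : a ≤ succAbove j a := by unfold succAbove; split_ifs <;> omega

end Shift

lemma mem_shape_of_mem_points (T : TreeLikeTableau) {p : ℕ × ℕ} (h : p ∈ T.points) :
    p ∈ T.shape :=
  (T.shape.mem_cells p).mp (T.points_subset h)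

lemma ext {T T' : TreeLikeTableau} (hs : T.shape = T'.shape) (hp : T.points = T'.points) :
    T = T' := by
  cases T; cases T'; cases hs; cases hp; rfl

lemma one_le_rowLen {T : TreeLikeTableau} {t : ℕ} (ht : t < T.shape.colLen 0) :
    1 ≤ T.shape.rowLen t := by
  rw [← YoungDiagram.mem_iff_lt_colLen] at ht
  exact YoungDiagram.mem_iff_lt_rowLen.mp ht

section Counting

open Finset

lemma card_filter_leftmost (P : Finset (ℕ × ℕ)) :
    #{p ∈ P | ¬∃ c < p.2, (p.1, c) ∈ P} = #(P.image Prod.fst) := by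
  refine card_bij (fun p _ => p.1) (fun p hp => mem_image_of_mem _ (mem_filter.mp hp).1)
    ?_ ?_
  · rintro ⟨a, b⟩ hp ⟨a', b'⟩ hp' (rfl : a = a')
    simp only [mem_filter, not_exists, not_and] at hp hp'
    have := hp.2 b'; have := hp'.2 b
    grind
  · intro a ha
    obtain ⟨p, hp, hmin⟩ := exists_min_image (P.filter (·.1 = a)) Prod.snd
      (by simpa [Finset.Nonempty] using ha)
    simp only [mem_filter] at hp hmin
    refine ⟨p, mem_filter.mpr ⟨hp.1, ?_⟩, hp.2⟩
    rintro ⟨c, hc, hcP⟩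
    exact absurd (hmin _ ⟨hcP, hp.2⟩) (by omega)

lemma card_filter_topmost (P : Finset (ℕ × ℕ)) :
    #{p ∈ P | ¬∃ r < p.1, (r, p.2) ∈ P} = #(P.image Prod.snd) := by
  rw [← card_image_of_injective _ Prod.swap_injective]
  convert card_filter_leftmost (P.image Prod.swap) using 2
  · ext ⟨a, b⟩
    simp
  · ext
    simp

variable (T : TreeLikeTableau)

lemma image_fst_points : T.points.image Prod.fst = range (T.shape.colLen 0) := by
  ext i
  simp only [mem_image, mem_range, ← YoungDiagram.mem_iff_lt_colLen, Prod.exists,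
    exists_and_right, exists_eq_right]
  constructor
  · rintro ⟨c, hc⟩
    exact T.shape.up_left_mem le_rfl (Nat.zero_le c) (T.mem_shape_of_mem_points hc)
  · exact fun h => T.no_empty_row i 0 ((T.shape.mem_cells _).mpr h)

lemma image_snd_points : T.points.image Prod.snd = range (T.shape.rowLen 0) := by
  ext i
  simp only [mem_image, mem_range, ← YoungDiagram.mem_iff_lt_rowLen, Prod.exists,
    exists_eq_right]
  constructor
  · rintro ⟨r, hr⟩
    exact T.shape.up_left_mem (Nat.zero_le r) le_rfl (T.mem_shape_of_mem_points hr)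
  · exact fun h => T.no_empty_col 0 i ((T.shape.mem_cells _).mpr h)

/-- Every point but the root is the first point of its row or of its column, and not both. -/
lemma colLen_zero_add_rowLen_zero : T.shape.colLen 0 + T.shape.rowLen 0 = T.size + 1 := by
  set L := T.points.filter fun p => ¬∃ c < p.2, (p.1, c) ∈ T.points
  set U := T.points.filter fun p => ¬∃ r < p.1, (r, p.2) ∈ T.points
  have hunion : L ∪ U = T.points := by
    refine (union_subset (filter_subset _ _) (filter_subset _ _)).antisymm fun p hp => ?_
    simp only [mem_union, mem_filter]
    by_cases h0 : p = (0, 0)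
    · subst h0; simp [hp]
    · rcases T.point_cond p hp h0 with ⟨-, h⟩ | ⟨-, h⟩ <;> simp [hp, h]
  have hinter : L ∩ U = {(0, 0)} := by
    ext p
    simp only [L, U, mem_inter, mem_filter, mem_singleton]
    constructor
    · rintro ⟨⟨hp, hl⟩, -, hu⟩
      by_contra h0
      rcases T.point_cond p hp h0 with ⟨h, -⟩ | ⟨h, -⟩
      exacts [hu h, hl h]
    · rintro rfl
      simp [T.root_mem]
  have := card_union_add_card_inter L U
  rw [hunion, hinter, card_singleton, card_filter_leftmost, card_filter_topmost,
    image_fst_points, image_snd_points, card_range, card_range] at this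
  rw [size]; omega

end Counting

def HasAbove (P : Finset (ℕ × ℕ)) (p : ℕ × ℕ) : Prop := ∃ r < p.1, (r, p.2) ∈ P

def HasLeft (P : Finset (ℕ × ℕ)) (p : ℕ × ℕ) : Prop := ∃ c < p.2, (p.1, c) ∈ P

lemma hasLeft_swap_iff {P : Finset (ℕ × ℕ)} (hP : ∀ a b, (a, b) ∈ P ↔ (b, a) ∈ P)
    (p : ℕ × ℕ) : HasLeft P p.swap ↔ HasAbove P p := by
  simp only [HasLeft, HasAbove, Prod.fst_swap, Prod.snd_swap, hP p.2]

lemma exists_forall_mem_col_of_symm {C P : Finset (ℕ × ℕ)}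
    (hC : ∀ a b, (a, b) ∈ C → (b, a) ∈ C) (hP : ∀ a b, (a, b) ∈ P → (b, a) ∈ P)
    (hrow : ∀ a b, (a, b) ∈ C → ∃ c, (a, c) ∈ P) :
    ∀ a b, (a, b) ∈ C → ∃ r, (r, b) ∈ P := fun a b h =>
  (hrow b a (hC a b h)).imp fun c hc => hP b c hc

lemma xor_hasAbove_hasLeft (T : TreeLikeTableau) {p : ℕ × ℕ} (hp : p ∈ T.points)
    (h0 : p ≠ (0, 0)) : Xor (HasAbove T.points p) (HasLeft T.points p) :=
  T.point_cond p hp h0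

lemma mem_occCorners_iff {T : TreeLikeTableau} {a b : ℕ} :
    (a, b) ∈ T.occCorners ↔ (a, b) ∈ T.points ∧ (a + 1, b) ∉ T.shape ∧ (a, b + 1) ∉ T.shape := by
  simp [occCorners, YoungDiagram.mem_cells]

namespace IsSymmetric

variable {T : TreeLikeTableau} {a b : ℕ}

lemma mem_points_comm (hT : T.IsSymmetric) : (a, b) ∈ T.points ↔ (b, a) ∈ T.points :=
  hT.2 (a, b)

lemma mem_shape_comm (hT : T.IsSymmetric) : (a, b) ∈ T.shape ↔ (b, a) ∈ T.shape := by
  conv_lhs => rw [← hT.1, YoungDiagram.mem_transpose]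
  rfl

lemma colLen_eq_rowLen (hT : T.IsSymmetric) (i : ℕ) : T.shape.colLen i = T.shape.rowLen i := by
  rw [← YoungDiagram.rowLen_transpose, hT.1]

lemma two_mul_colLen_zero (hT : T.IsSymmetric) : 2 * T.shape.colLen 0 = T.size + 1 := by
  have := T.colLen_zero_add_rowLen_zero
  rw [← hT.colLen_eq_rowLen] at this
  omega

lemma hasLeft_swap_iff (hT : T.IsSymmetric) (p : ℕ × ℕ) :
    HasLeft T.points p.swap ↔ HasAbove T.points p :=
  TreeLikeTableau.hasLeft_swap_iff (fun _ _ => hT.mem_points_comm) p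

lemma swap_mem_occCorners (hT : T.IsSymmetric) (h : (a, b) ∈ T.occCorners) :
    (b, a) ∈ T.occCorners := by
  obtain ⟨hp, hdown, hright⟩ := mem_occCorners_iff.mp h
  exact mem_occCorners_iff.mpr ⟨hT.mem_points_comm.mp hp,
    fun h' => hright (hT.mem_shape_comm.mp h'), fun h' => hdown (hT.mem_shape_comm.mp h')⟩

/-- A diagonal point other than the root has a point above it iff it has one to its left, so it
cannot be a point of a tree-like tableau; and an occupied corner at the root is the only cell. -/
lemma fst_ne_snd_of_mem_occCorners (hT : T.IsSymmetric) (hsize : T.size ≠ 1) {p : ℕ × ℕ}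
    (h : p ∈ T.occCorners) : p.1 ≠ p.2 := by
  obtain ⟨a, b⟩ := p
  rintro (rfl : a = b)
  obtain ⟨hp, hdown, hright⟩ := mem_occCorners_iff.mp h
  rcases Nat.eq_zero_or_pos a with rfl | ha
  · refine hsize ?_
    suffices T.points = {(0, 0)} by rw [size, this, Finset.card_singleton]
    refine Finset.eq_singleton_iff_unique_mem.mpr ⟨T.root_mem, fun ⟨r, c⟩ hrc => ?_⟩
    have hrc := T.mem_shape_of_mem_points hrc
    have hr : r = 0 := by
      by_contra hr
      exact hdown (T.shape.up_left_mem (by omega) (Nat.zero_le c) hrc)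
    have hc : c = 0 := by
      by_contra hc
      exact hright (T.shape.up_left_mem (Nat.zero_le r) (by omega) hrc)
    rw [hr, hc]
  · have := T.xor_hasAbove_hasLeft hp (by simp; omega)
    rw [← hT.hasLeft_swap_iff] at this
    exact absurd this (by simp)

lemma mem_cells_comm (hT : T.IsSymmetric) (a b : ℕ) :
    (a, b) ∈ T.shape.cells ↔ (b, a) ∈ T.shape.cells := by
  simp only [YoungDiagram.mem_cells, hT.mem_shape_comm]

lemma lt_rowLen_of_mem_col (hT : T.IsSymmetric) {r t : ℕ} (h : (r, t) ∈ T.shape) :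
    r < T.shape.rowLen t := by
  rwa [← hT.colLen_eq_rowLen, ← YoungDiagram.mem_iff_lt_colLen]

lemma lt_of_mem_row_rowLen (hT : T.IsSymmetric) {t c : ℕ} (h : (T.shape.rowLen t, c) ∈ T.shape) :
    c < t := by
  by_contra hc
  exact lt_irrefl _ (hT.lt_rowLen_of_mem_col (T.shape.up_left_mem le_rfl (not_lt.mp hc) h))

lemma colLen_zero_eq (hT : T.IsSymmetric) {n : ℕ} (hn : 1 ≤ n)
    (hsize : T.size = 2 * n - 1) : T.shape.colLen 0 = n := by
  have := hT.two_mul_colLen_zero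
  omega

end IsSymmetric

/-- The occupied corner `(j, x)` of a nearly empty row `j`, i.e. the only point of that row. -/
structure IsLonelyCorner (T : TreeLikeTableau) (j x : ℕ) : Prop where
  mem_occCorners : (j, x) ∈ T.occCorners
  eq_of_mem_row : ∀ c, (j, c) ∈ T.points → c = x

lemma isLonelyCorner_iff_not_hasLeft {T : TreeLikeTableau} {j x : ℕ}
    (h : (j, x) ∈ T.occCorners) : T.IsLonelyCorner j x ↔ ¬HasLeft T.points (j, x) := by
  obtain ⟨-, -, hright⟩ := mem_occCorners_iff.mp h
  refine ⟨fun hq ⟨c, hc, hmem⟩ => absurd (hq.eq_of_mem_row c hmem) (by simp at hc; omega),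
    fun hl => ⟨h, fun c hc => ?_⟩⟩
  have hcx : c ≤ x := by
    by_contra hcx
    exact hright (T.shape.up_left_mem le_rfl (by omega) (T.mem_shape_of_mem_points hc))
  by_contra hne
  exact hl ⟨c, by simp; omega, hc⟩

/-- The corner has a point above it (making its mirror image lonely) or to its left (otherwise it
is lonely itself), but not both. -/
lemma IsSymmetric.isLonelyCorner_swap_iff {T : TreeLikeTableau} (hT : T.IsSymmetric)
    {a b : ℕ} (h : (a, b) ∈ T.occCorners) (hab : a ≠ b) :
    T.IsLonelyCorner b a ↔ ¬T.IsLonelyCorner a b := by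
  rw [isLonelyCorner_iff_not_hasLeft h, isLonelyCorner_iff_not_hasLeft (hT.swap_mem_occCorners h),
    show ((b, a) : ℕ × ℕ) = (a, b).swap from rfl, hT.hasLeft_swap_iff]
  have := T.xor_hasAbove_hasLeft (p := (a, b)) (mem_occCorners_iff.mp h).1 (by simp; omega)
  rcases this with ⟨h1, h2⟩ | ⟨h1, h2⟩ <;> tauto

namespace IsLonelyCorner

variable {T : TreeLikeTableau} {j x : ℕ}

lemma mem_points (hq : T.IsLonelyCorner j x) : (j, x) ∈ T.points :=
  (mem_occCorners_iff.mp hq.mem_occCorners).1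

lemma mem_row_iff (hq : T.IsLonelyCorner j x) {c : ℕ} : (j, c) ∈ T.shape ↔ c ≤ x := by
  obtain ⟨hp, -, hright⟩ := mem_occCorners_iff.mp hq.mem_occCorners
  have hp := T.mem_shape_of_mem_points hp
  rw [YoungDiagram.mem_iff_lt_rowLen] at hp hright ⊢
  omega

lemma le_of_mem_col (hq : T.IsLonelyCorner j x) {r : ℕ} (h : (r, x) ∈ T.shape) : r ≤ j := by
  obtain ⟨-, hdown, -⟩ := mem_occCorners_iff.mp hq.mem_occCorners
  by_contra hr
  exact hdown (T.shape.up_left_mem (by omega) le_rfl h)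

lemma hasAbove (hq : T.IsLonelyCorner j x) (hjx : j ≠ x) : HasAbove T.points (j, x) := by
  have hl := (isLonelyCorner_iff_not_hasLeft hq.mem_occCorners).mp hq
  rcases T.xor_hasAbove_hasLeft hq.mem_points (by simp; omega) with ⟨h, -⟩ | ⟨h, -⟩
  exacts [h, absurd h hl]

lemma one_le (hq : T.IsLonelyCorner j x) (hjx : j ≠ x) : 1 ≤ j := by
  obtain ⟨r, hr, -⟩ := hq.hasAbove hjx
  exact Nat.one_le_of_lt hr

lemma eq_of_mem_col (hq : T.IsLonelyCorner j x) (hT : T.IsSymmetric) {r : ℕ}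
    (h : (r, j) ∈ T.points) : r = x :=
  hq.eq_of_mem_row r (hT.mem_points_comm.mp h)

lemma mem_col_iff (hq : T.IsLonelyCorner j x) (hT : T.IsSymmetric) {r : ℕ} :
    (r, j) ∈ T.shape ↔ r ≤ x := by
  rw [hT.mem_shape_comm, hq.mem_row_iff]

end IsLonelyCorner

lemma injective_prodMap_succAbove (j : ℕ) :
    Function.Injective (Prod.map (succAbove j) (succAbove j)) :=
  (strictMono_succAbove j).injective.prodMap (strictMono_succAbove j).injective

/-- `s` with an empty row `j` and an empty column `j` inserted. -/
def expandAt (j : ℕ) (s : Finset (ℕ × ℕ)) : Finset (ℕ × ℕ) :=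
  s.map ⟨_, injective_prodMap_succAbove j⟩

noncomputable def contractAt (j : ℕ) (s : Finset (ℕ × ℕ)) : Finset (ℕ × ℕ) :=
  s.preimage _ (injective_prodMap_succAbove j).injOn

def insertCells (s : Finset (ℕ × ℕ)) (j x : ℕ) : Finset (ℕ × ℕ) :=
  expandAt j s ∪ (Finset.range (x + 1)).image (j, ·) ∪ (Finset.range (x + 1)).image (·, j)

def insertPoints (s : Finset (ℕ × ℕ)) (j x : ℕ) : Finset (ℕ × ℕ) :=
  expandAt j s ∪ {(j, x), (x, j)}

section Cross

variable {s : Finset (ℕ × ℕ)} {j x a b : ℕ}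

lemma mem_contractAt : (a, b) ∈ contractAt j s ↔ (succAbove j a, succAbove j b) ∈ s :=
  Finset.mem_preimage

lemma mem_expandAt_succAbove :
    (succAbove j a, succAbove j b) ∈ expandAt j s ↔ (a, b) ∈ s :=
  Finset.mem_map' _ (a := (a, b))

lemma exists_of_mem_expandAt {p : ℕ × ℕ} (h : p ∈ expandAt j s) :
    ∃ a b, (a, b) ∈ s ∧ (succAbove j a, succAbove j b) = p := by
  obtain ⟨⟨a, b⟩, hab, rfl⟩ := Finset.mem_map.mp h
  exact ⟨a, b, hab, rfl⟩

lemma mem_expandAt :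
    (a, b) ∈ expandAt j s ↔ a ≠ j ∧ b ≠ j ∧ (predAbove j a, predAbove j b) ∈ s := by
  constructor
  · intro h
    obtain ⟨⟨a', b'⟩, h', he⟩ := Finset.mem_map.mp h
    obtain ⟨rfl, rfl⟩ := Prod.mk.inj he
    simpa [succAbove_ne, predAbove_succAbove] using h'
  · rintro ⟨ha, hb, h⟩
    rw [← succAbove_predAbove ha, ← succAbove_predAbove hb]
    exact mem_expandAt_succAbove.mpr h

lemma contractAt_expandAt (j : ℕ) (s : Finset (ℕ × ℕ)) : contractAt j (expandAt j s) = s := by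
  ext ⟨a, b⟩
  rw [mem_contractAt, mem_expandAt_succAbove]

lemma mem_insertCells : (a, b) ∈ insertCells s j x ↔
    (a = j ∧ b ≤ x) ∨ (b = j ∧ a ≤ x) ∨ (a, b) ∈ expandAt j s := by
  simp only [insertCells, Finset.mem_union, Finset.mem_image, Finset.mem_range, Prod.mk.injEq]
  grind

lemma mem_insertPoints : (a, b) ∈ insertPoints s j x ↔
    (a = j ∧ b = x) ∨ (a = x ∧ b = j) ∨ (a, b) ∈ expandAt j s := by
  simp only [insertPoints, Finset.mem_union, Finset.mem_insert, Finset.mem_singleton,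
    Prod.mk.injEq]
  tauto

lemma mem_expandAt_comm (hs : ∀ a b, (a, b) ∈ s ↔ (b, a) ∈ s) :
    (a, b) ∈ expandAt j s ↔ (b, a) ∈ expandAt j s := by
  rw [mem_expandAt, mem_expandAt, hs]
  tauto

lemma mem_contractAt_comm (hs : ∀ a b, (a, b) ∈ s ↔ (b, a) ∈ s) :
    (a, b) ∈ contractAt j s ↔ (b, a) ∈ contractAt j s := by
  rw [mem_contractAt, mem_contractAt, hs]

lemma mem_insertCells_comm (hs : ∀ a b, (a, b) ∈ s ↔ (b, a) ∈ s) :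
    (a, b) ∈ insertCells s j x ↔ (b, a) ∈ insertCells s j x := by
  rw [mem_insertCells, mem_insertCells, mem_expandAt_comm hs]
  tauto

lemma mem_insertPoints_comm (hs : ∀ a b, (a, b) ∈ s ↔ (b, a) ∈ s) :
    (a, b) ∈ insertPoints s j x ↔ (b, a) ∈ insertPoints s j x := by
  rw [mem_insertPoints, mem_insertPoints, mem_expandAt_comm hs]
  tauto

lemma contractAt_insertCells : contractAt j (insertCells s j x) = s := by
  ext ⟨a, b⟩
  simp [mem_contractAt, mem_insertCells, succAbove_ne, mem_expandAt_succAbove]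

lemma contractAt_insertPoints : contractAt j (insertPoints s j x) = s := by
  ext ⟨a, b⟩
  simp [mem_contractAt, mem_insertPoints, succAbove_ne, mem_expandAt_succAbove]

lemma card_insertPoints (hjx : j ≠ x) : (insertPoints s j x).card = s.card + 2 := by
  rw [insertPoints, Finset.card_union_of_disjoint, expandAt, Finset.card_map,
    Finset.card_pair (by simp [hjx])]
  simp [Finset.disjoint_right, mem_expandAt]

lemma hasAbove_contractAt_iff : HasAbove (contractAt j s) (a, b) ↔
    ∃ r < succAbove j a, r ≠ j ∧ (r, succAbove j b) ∈ s := by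
  simp only [HasAbove, mem_contractAt]
  constructor
  · rintro ⟨r, hr, h⟩
    exact ⟨succAbove j r, strictMono_succAbove j hr, succAbove_ne j r, h⟩
  · rintro ⟨r, hr, hrj, h⟩
    refine ⟨predAbove j r, ?_, by rwa [succAbove_predAbove hrj]⟩
    rwa [← (strictMono_succAbove j).lt_iff_lt, succAbove_predAbove hrj]

lemma hasAbove_expandAt_iff :
    HasAbove (expandAt j s) (succAbove j a, succAbove j b) ↔ HasAbove s (a, b) := by
  conv_rhs => rw [← contractAt_expandAt j s, hasAbove_contractAt_iff]
  exact ⟨fun ⟨r, hr, h⟩ => ⟨r, hr, (mem_expandAt.mp h).1, h⟩, fun ⟨r, hr, _, h⟩ => ⟨r, hr, h⟩⟩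

lemma insertPoints_subset_insertCells {P S : Finset (ℕ × ℕ)} (h : P ⊆ S) (j x : ℕ) :
    insertPoints P j x ⊆ insertCells S j x := by
  rintro ⟨a, b⟩ hp
  rw [mem_insertPoints] at hp
  rw [mem_insertCells]
  rcases hp with ⟨ha, hb⟩ | ⟨ha, hb⟩ | hp
  · exact Or.inl ⟨ha, hb.le⟩
  · exact Or.inr (Or.inl ⟨hb, ha.le⟩)
  · exact Or.inr (Or.inr (Finset.map_subset_map.mpr h hp))

end Cross

lemma isLowerSet_of_swap {s : Set (ℕ × ℕ)} (hs : ∀ a b, (a, b) ∈ s → (b, a) ∈ s)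
    (hrow : ∀ a b b', b' ≤ b → (a, b) ∈ s → (a, b') ∈ s) : IsLowerSet s := by
  rintro ⟨a, b⟩ ⟨a', b'⟩ ⟨ha, hb⟩ h
  exact hs _ _ (hrow _ _ _ ha (hs _ _ (hrow _ _ _ hb h)))


section Insert

variable {T : TreeLikeTableau} {t j x : ℕ}

lemma mem_insertCells_of_le (hT : T.IsSymmetric) (ht : t < T.shape.colLen 0)
    (hj : T.shape.rowLen t = j) (hx : succAbove j t = x) {a b b' : ℕ} (hb' : b' ≤ b)
    (h : (a, b) ∈ insertCells T.shape.cells j x) : (a, b') ∈ insertCells T.shape.cells j x := by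
  have hj1 : 1 ≤ j := hj ▸ one_le_rowLen ht
  have hdx : predAbove j x = t := hx ▸ predAbove_succAbove j t
  simp only [mem_insertCells, mem_expandAt, YoungDiagram.mem_cells] at h ⊢
  rcases h with ⟨haj, hbx⟩ | ⟨hbj, hax⟩ | ⟨haj, hbj, hab⟩
  · exact Or.inl ⟨haj, hb'.trans hbx⟩
  · by_cases hb'j : b' = j
    · exact Or.inr (Or.inl ⟨hb'j, hax⟩)
    by_cases haj : a = j
    · exact Or.inl ⟨haj, by omega⟩
    refine Or.inr (Or.inr ⟨haj, hb'j, ?_⟩)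
    rw [predAbove_of_lt (by omega : b' < j)]
    have hrow : (t, j - 1) ∈ T.shape := by rw [YoungDiagram.mem_iff_lt_rowLen]; omega
    exact T.shape.up_left_mem (hdx ▸ monotone_predAbove j hax) (by omega) hrow
  · by_cases hb'j : b' = j
    · refine Or.inr (Or.inl ⟨hb'j, ?_⟩)
      -- `(predAbove j a, j)` is an old cell, whose mirror lies in the row `j = rowLen t`
      have hjb : j ≤ predAbove j b := by unfold predAbove; split_ifs <;> omega
      have hrow := hT.mem_shape_comm.mp (T.shape.up_left_mem le_rfl hjb hab)
      have hlt : predAbove j a < t := hT.lt_of_mem_row_rowLen (by rw [hj]; exact hrow)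
      have := strictMono_succAbove j hlt
      rw [succAbove_predAbove haj, hx] at this
      exact this.le
    · exact Or.inr (Or.inr ⟨haj, hb'j, T.shape.up_left_mem le_rfl (monotone_predAbove j hb') hab⟩)

lemma hasAbove_insertPoints_iff (hT : T.IsSymmetric) (hj : T.shape.rowLen t = j)
    (hx : succAbove j t = x) {a b : ℕ} (h : (a, b) ∈ T.points) :
    HasAbove (insertPoints T.points j x) (succAbove j a, succAbove j b) ↔
      HasAbove T.points (a, b) := by
  rw [← hasAbove_expandAt_iff (j := j) (s := T.points)]
  refine ⟨fun ⟨r, hr, hmem⟩ => ?_, fun ⟨r, hr, hmem⟩ => ⟨r, hr, Finset.mem_union_left _ hmem⟩⟩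
  rcases mem_insertPoints.mp hmem with ⟨hrj, hbx⟩ | ⟨-, hbj⟩ | hmem
  · -- the new point `(j, x)` lies below all the old points of its column
    have hbt : b = t := (strictMono_succAbove j).injective (hbx.trans hx.symm)
    have ha : a < j := hj ▸ hT.lt_rowLen_of_mem_col (hbt ▸ T.mem_shape_of_mem_points h)
    simp only [succAbove_of_lt ha] at hr
    omega
  · exact absurd hbj (succAbove_ne j b)
  · exact ⟨r, hr, hmem⟩

lemma hasLeft_insertPoints_iff (hT : T.IsSymmetric) (hj : T.shape.rowLen t = j)
    (hx : succAbove j t = x) {a b : ℕ} (h : (a, b) ∈ T.points) :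
    HasLeft (insertPoints T.points j x) (succAbove j a, succAbove j b) ↔
      HasLeft T.points (a, b) := by
  have hN (a b : ℕ) := mem_insertPoints_comm (j := j) (x := x) (a := a) (b := b)
    fun _ _ => hT.mem_points_comm
  rw [show (succAbove j a, succAbove j b) = (succAbove j b, succAbove j a).swap from rfl,
    hasLeft_swap_iff hN, hasAbove_insertPoints_iff hT hj hx (hT.mem_points_comm.mp h),
    ← hT.hasLeft_swap_iff]
  rfl

lemma hasAbove_insertPoints_self (hT : T.IsSymmetric) (ht : t < T.shape.colLen 0)
    (hj : T.shape.rowLen t = j) (hx : succAbove j t = x) :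
    HasAbove (insertPoints T.points j x) (j, x) := by
  have hcol : (0, t) ∈ T.shape.cells := by
    rw [YoungDiagram.mem_cells, YoungDiagram.mem_iff_lt_colLen, hT.colLen_eq_rowLen, hj]
    exact hj ▸ one_le_rowLen ht
  obtain ⟨r, hr⟩ := T.no_empty_col 0 t hcol
  have hrj : r < j := hj ▸ hT.lt_rowLen_of_mem_col (T.mem_shape_of_mem_points hr)
  refine ⟨r, hrj, Finset.mem_union_left _ ?_⟩
  rw [← succAbove_of_lt hrj, ← hx]
  exact mem_expandAt_succAbove.mpr hr

lemma not_hasLeft_insertPoints_self {s : Finset (ℕ × ℕ)} (hjx : j ≠ x) :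
    ¬HasLeft (insertPoints s j x) (j, x) := by
  rintro ⟨c, hc, hmem⟩
  rcases mem_insertPoints.mp hmem with ⟨-, hcx⟩ | ⟨hjx', -⟩ | hmem
  · exact absurd hcx (Nat.ne_of_lt hc)
  · exact hjx hjx'
  · exact (mem_expandAt.mp hmem).1 rfl

lemma xor_hasAbove_hasLeft_insertPoints (hT : T.IsSymmetric) (ht : t < T.shape.colLen 0)
    (hj : T.shape.rowLen t = j) (hx : succAbove j t = x) :
    ∀ p ∈ insertPoints T.points j x, p ≠ (0, 0) →
      Xor (HasAbove (insertPoints T.points j x) p) (HasLeft (insertPoints T.points j x) p) := by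
  have hN (a b : ℕ) := mem_insertPoints_comm (j := j) (x := x) (a := a) (b := b)
    fun _ _ => hT.mem_points_comm
  have hcorner : Xor (HasAbove (insertPoints T.points j x) (j, x))
      (HasLeft (insertPoints T.points j x) (j, x)) :=
    Or.inl ⟨hasAbove_insertPoints_self hT ht hj hx,
      not_hasLeft_insertPoints_self (hx ▸ (succAbove_ne j t).symm)⟩
  rintro p hp h0
  rcases Finset.mem_union.mp hp with hp | hp
  · obtain ⟨a, b, hab, rfl⟩ := exists_of_mem_expandAt hp
    rw [hasAbove_insertPoints_iff hT hj hx hab, hasLeft_insertPoints_iff hT hj hx hab]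
    refine T.xor_hasAbove_hasLeft hab ?_
    rintro ⟨⟩
    exact h0 (by simp [succAbove_of_lt (hj ▸ one_le_rowLen ht)])
  rcases Finset.mem_insert.mp hp with rfl | hp
  · exact hcorner
  · have habove : HasAbove (insertPoints T.points j x) (x, j) ↔
        HasLeft (insertPoints T.points j x) (j, x) := (hasLeft_swap_iff hN (x, j)).symm
    have hleft : HasLeft (insertPoints T.points j x) (x, j) ↔
        HasAbove (insertPoints T.points j x) (j, x) := hasLeft_swap_iff hN (j, x)
    rw [Finset.mem_singleton.mp hp, habove, hleft, _root_.xor_comm]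
    exact hcorner

lemma exists_mem_insertPoints_row (ht : t < T.shape.colLen 0) (hx : succAbove j t = x) :
    ∀ a b, (a, b) ∈ insertCells T.shape.cells j x → ∃ c, (a, c) ∈ insertPoints T.points j x := by
  intro a b h
  by_cases haj : a = j
  · exact ⟨x, mem_insertPoints.mpr (Or.inl ⟨haj, rfl⟩)⟩
  have hrow : (predAbove j a, 0) ∈ T.shape := by
    rcases mem_insertCells.mp h with ⟨ha, -⟩ | ⟨-, hax⟩ | hab
    · exact absurd ha haj
    · have hdx : predAbove j x = t := hx ▸ predAbove_succAbove j t
      have ht0 : (t, 0) ∈ T.shape := YoungDiagram.mem_iff_lt_colLen.mpr ht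
      exact T.shape.up_left_mem (hdx ▸ monotone_predAbove j hax) le_rfl ht0
    · exact T.shape.up_left_mem le_rfl (Nat.zero_le _)
        ((T.shape.mem_cells _).mp (mem_expandAt.mp hab).2.2)
  obtain ⟨c, hc⟩ := T.no_empty_row _ 0 ((T.shape.mem_cells _).mpr hrow)
  refine ⟨succAbove j c, Finset.mem_union_left _ ?_⟩
  rw [← succAbove_predAbove haj]
  exact mem_expandAt_succAbove.mpr hc

lemma notMem_insertCells_below (hT : T.IsSymmetric) (hj : T.shape.rowLen t = j)
    (hx : succAbove j t = x) : (j + 1, x) ∉ insertCells T.shape.cells j x := by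
  have hcol : (j, t) ∉ T.shape := fun h => lt_irrefl _ (hj ▸ hT.lt_rowLen_of_mem_col h)
  rw [show j + 1 = succAbove j j from (if_neg (lt_irrefl j)).symm, ← hx, mem_insertCells,
    mem_expandAt_succAbove, YoungDiagram.mem_cells]
  simp [succAbove_ne, hcol]

lemma notMem_insertCells_right (s : Finset (ℕ × ℕ)) (j x : ℕ) :
    (j, x + 1) ∉ insertCells s j x := by
  rw [mem_insertCells, mem_expandAt]
  omega

lemma eq_of_mem_insertPoints_row {s : Finset (ℕ × ℕ)} (hjx : j ≠ x) {c : ℕ}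
    (h : (j, c) ∈ insertPoints s j x) : c = x := by
  rcases mem_insertPoints.mp h with ⟨-, hc⟩ | ⟨hjx', -⟩ | h
  exacts [hc, absurd hjx' hjx, absurd rfl (mem_expandAt.mp h).1]

variable (T) in
/-- Inverse of `eraseCross`: insert row and column `j = rowLen t`, whose only points are `(j, x)`
and its mirror image, `x` being the new index of row `t`. -/
def insertCross (hT : T.IsSymmetric) (t : ℕ) (ht : t < T.shape.colLen 0) : TreeLikeTableau where
  shape := ⟨insertCells T.shape.cells (T.shape.rowLen t) (succAbove (T.shape.rowLen t) t),
    isLowerSet_of_swap (fun _ _ => (mem_insertCells_comm hT.mem_cells_comm).mp)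
      fun _ _ _ hb => mem_insertCells_of_le hT ht rfl rfl hb⟩
  points := insertPoints T.points (T.shape.rowLen t) (succAbove (T.shape.rowLen t) t)
  points_subset := insertPoints_subset_insertCells T.points_subset _ _
  root_mem := by
    have hj1 := one_le_rowLen ht
    rw [mem_insertPoints, mem_expandAt, predAbove_of_lt hj1]
    exact Or.inr (Or.inr ⟨by omega, by omega, T.root_mem⟩)
  point_cond := xor_hasAbove_hasLeft_insertPoints hT ht rfl rfl
  no_empty_row := exists_mem_insertPoints_row ht rfl
  no_empty_col := exists_forall_mem_col_of_symm
    (fun _ _ => (mem_insertCells_comm hT.mem_cells_comm).mp)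
    (fun _ _ => (mem_insertPoints_comm fun _ _ => hT.mem_points_comm).mp)
    (exists_mem_insertPoints_row ht rfl)

variable (hT : T.IsSymmetric) (ht : t < T.shape.colLen 0)

lemma insertCross_isSymmetric : (T.insertCross hT t ht).IsSymmetric := by
  refine ⟨YoungDiagram.ext ?_, fun ⟨a, b⟩ => mem_insertPoints_comm fun _ _ => hT.mem_points_comm⟩
  ext ⟨a, b⟩
  rw [YoungDiagram.mem_cells, YoungDiagram.mem_transpose]
  exact (mem_insertCells_comm hT.mem_cells_comm).symm

lemma size_insertCross : (T.insertCross hT t ht).size = T.size + 2 :=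
  card_insertPoints (succAbove_ne _ t).symm

lemma isLonelyCorner_insertCross :
    (T.insertCross hT t ht).IsLonelyCorner (T.shape.rowLen t) (succAbove (T.shape.rowLen t) t) :=
  ⟨mem_occCorners_iff.mpr ⟨mem_insertPoints.mpr (Or.inl ⟨rfl, rfl⟩),
      notMem_insertCells_below hT rfl rfl, notMem_insertCells_right _ _ _⟩,
    fun _ => eq_of_mem_insertPoints_row (succAbove_ne _ t).symm⟩

end Insert

noncomputable def _root_.YoungDiagram.contractAt (μ : YoungDiagram) (j : ℕ) : YoungDiagram where
  cells := TreeLikeTableau.contractAt j μ.cells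
  isLowerSet := by
    rintro ⟨a, b⟩ ⟨a', b'⟩ ⟨ha, hb⟩ h
    simp only [Finset.mem_coe, TreeLikeTableau.mem_contractAt, YoungDiagram.mem_cells] at h ⊢
    exact μ.up_left_mem ((strictMono_succAbove j).monotone ha)
      ((strictMono_succAbove j).monotone hb) h

section Erase

variable {T : TreeLikeTableau} {j x : ℕ}

lemma hasAbove_contractAt_iff_of_isLonelyCorner (hq : T.IsLonelyCorner j x) {a b : ℕ}
    (h : (succAbove j a, succAbove j b) ∈ T.points) :
    HasAbove (contractAt j T.points) (a, b) ↔ HasAbove T.points (succAbove j a, succAbove j b) := by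
  rw [hasAbove_contractAt_iff]
  refine ⟨fun ⟨r, hr, _, hm⟩ => ⟨r, hr, hm⟩, fun ⟨r, hr, hm⟩ => ⟨r, hr, ?_, hm⟩⟩
  -- the lonely point `(j, x)` is the lowest point of its column
  rintro rfl
  have hbx : succAbove r b = x := hq.eq_of_mem_row _ hm
  rw [hbx] at h
  have := hq.le_of_mem_col (T.mem_shape_of_mem_points h)
  simp only at hr
  omega

lemma hasLeft_contractAt_iff_of_isLonelyCorner (hT : T.IsSymmetric) (hq : T.IsLonelyCorner j x)
    {a b : ℕ} (h : (succAbove j a, succAbove j b) ∈ T.points) :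
    HasLeft (contractAt j T.points) (a, b) ↔ HasLeft T.points (succAbove j a, succAbove j b) := by
  have hC (a b : ℕ) := mem_contractAt_comm (j := j) (a := a) (b := b)
    fun _ _ => hT.mem_points_comm
  rw [show (a, b) = (b, a).swap from rfl, hasLeft_swap_iff hC,
    hasAbove_contractAt_iff_of_isLonelyCorner hq (hT.mem_points_comm.mp h),
    ← hT.hasLeft_swap_iff]
  rfl

lemma xor_hasAbove_hasLeft_contractAt (hT : T.IsSymmetric) (hq : T.IsLonelyCorner j x) :
    ∀ p ∈ contractAt j T.points, p ≠ (0, 0) →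
      Xor (HasAbove (contractAt j T.points) p) (HasLeft (contractAt j T.points) p) := by
  rintro ⟨a, b⟩ hp h0
  rw [mem_contractAt] at hp
  rw [hasAbove_contractAt_iff_of_isLonelyCorner hq hp,
    hasLeft_contractAt_iff_of_isLonelyCorner hT hq hp]
  refine T.xor_hasAbove_hasLeft hp fun he => h0 ?_
  obtain ⟨ha, hb⟩ := Prod.mk.inj he
  have := le_succAbove j a
  have := le_succAbove j b
  ext <;> simp <;> omega

lemma exists_mem_contractAt_row (hT : T.IsSymmetric) (hq : T.IsLonelyCorner j x) (hjx : j ≠ x) :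
    ∀ a b, (a, b) ∈ contractAt j T.shape.cells → ∃ c, (a, c) ∈ contractAt j T.points := by
  intro a b h
  rw [mem_contractAt] at h
  obtain ⟨c, hc⟩ := T.no_empty_row _ _ h
  by_cases hcj : c = j
  · -- the row of the mirror point `(x, j)` also contains the mirror of the point above `(j, x)`
    have hax : succAbove j a = x := hq.eq_of_mem_col hT (hcj ▸ hc)
    obtain ⟨r, hr, hrx⟩ := hq.hasAbove hjx
    refine ⟨predAbove j r, ?_⟩
    rw [mem_contractAt, succAbove_predAbove hr.ne, hax]
    exact hT.mem_points_comm.mp hrx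
  · exact ⟨predAbove j c, by rwa [mem_contractAt, succAbove_predAbove hcj]⟩

variable (T) in
noncomputable def eraseCross (hT : T.IsSymmetric) (hq : T.IsLonelyCorner j x) (hjx : j ≠ x) :
    TreeLikeTableau where
  shape := T.shape.contractAt j
  points := contractAt j T.points
  points_subset := by
    rintro ⟨a, b⟩ hp
    exact mem_contractAt.mpr (T.points_subset (mem_contractAt.mp hp))
  root_mem := by
    rw [mem_contractAt, succAbove_of_lt (hq.one_le hjx)]
    exact T.root_mem
  point_cond := xor_hasAbove_hasLeft_contractAt hT hq
  no_empty_row := exists_mem_contractAt_row hT hq hjx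
  no_empty_col := exists_forall_mem_col_of_symm
    (fun _ _ => (mem_contractAt_comm hT.mem_cells_comm).mp)
    (fun _ _ => (mem_contractAt_comm fun _ _ => hT.mem_points_comm).mp)
    (exists_mem_contractAt_row hT hq hjx)

lemma insertPoints_contractAt (hT : T.IsSymmetric) (hq : T.IsLonelyCorner j x) :
    insertPoints (contractAt j T.points) j x = T.points := by
  ext ⟨a, b⟩
  rw [mem_insertPoints, mem_expandAt, mem_contractAt]
  constructor
  · rintro (⟨rfl, rfl⟩ | ⟨rfl, rfl⟩ | ⟨ha, hb, h⟩)
    · exact hq.mem_points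
    · exact hT.mem_points_comm.mp hq.mem_points
    · rwa [succAbove_predAbove ha, succAbove_predAbove hb] at h
  · intro h
    by_cases ha : a = j
    · exact Or.inl ⟨ha, hq.eq_of_mem_row b (ha ▸ h)⟩
    by_cases hb : b = j
    · exact Or.inr (Or.inl ⟨hq.eq_of_mem_col hT (hb ▸ h), hb⟩)
    · exact Or.inr (Or.inr ⟨ha, hb, by rwa [succAbove_predAbove ha, succAbove_predAbove hb]⟩)

lemma insertCells_contractAt (hT : T.IsSymmetric) (hq : T.IsLonelyCorner j x) :
    insertCells (contractAt j T.shape.cells) j x = T.shape.cells := by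
  ext ⟨a, b⟩
  rw [mem_insertCells, mem_expandAt, mem_contractAt, YoungDiagram.mem_cells,
    YoungDiagram.mem_cells]
  constructor
  · rintro (⟨rfl, hb⟩ | ⟨rfl, ha⟩ | ⟨ha, hb, h⟩)
    · exact hq.mem_row_iff.mpr hb
    · exact (hq.mem_col_iff hT).mpr ha
    · rwa [succAbove_predAbove ha, succAbove_predAbove hb] at h
  · intro h
    by_cases ha : a = j
    · exact Or.inl ⟨ha, hq.mem_row_iff.mp (ha ▸ h)⟩
    by_cases hb : b = j
    · exact Or.inr (Or.inl ⟨hb, (hq.mem_col_iff hT).mp (hb ▸ h)⟩)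
    · exact Or.inr (Or.inr ⟨ha, hb, by rwa [succAbove_predAbove ha, succAbove_predAbove hb]⟩)

variable (hT : T.IsSymmetric) (hq : T.IsLonelyCorner j x) (hjx : j ≠ x)

lemma eraseCross_isSymmetric : (T.eraseCross hT hq hjx).IsSymmetric := by
  refine ⟨YoungDiagram.ext ?_, fun ⟨a, b⟩ => mem_contractAt_comm fun _ _ => hT.mem_points_comm⟩
  ext ⟨a, b⟩
  rw [YoungDiagram.mem_cells, YoungDiagram.mem_transpose]
  exact (mem_contractAt_comm hT.mem_cells_comm).symm

lemma size_eraseCross : (T.eraseCross hT hq hjx).size + 2 = T.size := by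
  rw [size, size, ← card_insertPoints hjx]
  exact congrArg Finset.card (insertPoints_contractAt hT hq)

lemma rowLen_eraseCross : (T.eraseCross hT hq hjx).shape.rowLen (predAbove j x) = j := by
  refine eq_of_forall_lt_iff fun c => ?_
  rw [← YoungDiagram.mem_iff_lt_rowLen]
  change (predAbove j x, c) ∈ contractAt j T.shape.cells ↔ c < j
  rw [mem_contractAt, succAbove_predAbove hjx.symm, YoungDiagram.mem_cells, hT.mem_shape_comm]
  constructor
  · intro h
    have := hq.le_of_mem_col h
    exact succAbove_lt_iff.mp (lt_of_le_of_ne this (succAbove_ne j c))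
  · intro hc
    rw [succAbove_of_lt hc]
    exact T.shape.up_left_mem hc.le le_rfl (T.mem_shape_of_mem_points hq.mem_points)

lemma predAbove_lt_colLen_eraseCross :
    predAbove j x < (T.eraseCross hT hq hjx).shape.colLen 0 := by
  rw [← YoungDiagram.mem_iff_lt_colLen]
  change (predAbove j x, 0) ∈ contractAt j T.shape.cells
  rw [mem_contractAt, succAbove_predAbove hjx.symm, succAbove_of_lt (hq.one_le hjx),
    YoungDiagram.mem_cells]
  exact T.shape.up_left_mem le_rfl (Nat.zero_le j)
    (T.mem_shape_of_mem_points (hT.mem_points_comm.mp hq.mem_points))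

lemma insertCross_eraseCross (hT' : (T.eraseCross hT hq hjx).IsSymmetric)
    (ht : predAbove j x < (T.eraseCross hT hq hjx).shape.colLen 0) :
    (T.eraseCross hT hq hjx).insertCross hT' (predAbove j x) ht = T := by
  have hj := rowLen_eraseCross hT hq hjx
  have hx : succAbove j (predAbove j x) = x := succAbove_predAbove hjx.symm
  refine ext (YoungDiagram.ext ?_) ?_
  · change insertCells (contractAt j T.shape.cells)
      ((T.eraseCross hT hq hjx).shape.rowLen (predAbove j x))
      (succAbove ((T.eraseCross hT hq hjx).shape.rowLen (predAbove j x)) (predAbove j x)) = _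
    rw [hj, hx, insertCells_contractAt hT hq]
  · change insertPoints (contractAt j T.points)
      ((T.eraseCross hT hq hjx).shape.rowLen (predAbove j x))
      (succAbove ((T.eraseCross hT hq hjx).shape.rowLen (predAbove j x)) (predAbove j x)) = _
    rw [hj, hx, insertPoints_contractAt hT hq]

end Erase

lemma eraseCross_insertCross {T : TreeLikeTableau} (hT : T.IsSymmetric) {t : ℕ}
    (ht : t < T.shape.colLen 0) :
    (T.insertCross hT t ht).eraseCross (insertCross_isSymmetric hT ht)
      (isLonelyCorner_insertCross hT ht) (succAbove_ne _ t).symm = T :=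
  ext (YoungDiagram.ext contractAt_insertCells) contractAt_insertPoints

noncomputable def eraseCrossEquiv {k k' : ℕ} (hk : k' = k + 2) :
    {y : TreeLikeTableau × ℕ × ℕ //
        y.1.size = k' ∧ y.1.IsSymmetric ∧ y.1.IsLonelyCorner y.2.1 y.2.2} ≃
      {z : TreeLikeTableau × ℕ // z.1.size = k ∧ z.1.IsSymmetric ∧ z.2 < z.1.shape.colLen 0} where
  toFun y :=
    have hjx := y.2.2.1.fst_ne_snd_of_mem_occCorners (by omega) y.2.2.2.mem_occCorners
    ⟨(y.1.1.eraseCross y.2.2.1 y.2.2.2 hjx, predAbove y.1.2.1 y.1.2.2),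
      by have := size_eraseCross y.2.2.1 y.2.2.2 hjx; dsimp only; omega,
      eraseCross_isSymmetric y.2.2.1 y.2.2.2 hjx, predAbove_lt_colLen_eraseCross y.2.2.1 y.2.2.2 hjx⟩
  invFun z :=
    ⟨(z.1.1.insertCross z.2.2.1 z.1.2 z.2.2.2, z.1.1.shape.rowLen z.1.2,
        succAbove (z.1.1.shape.rowLen z.1.2) z.1.2),
      by dsimp only; rw [size_insertCross, z.2.1, hk], insertCross_isSymmetric z.2.2.1 z.2.2.2,
      isLonelyCorner_insertCross z.2.2.1 z.2.2.2⟩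
  left_inv := by
    rintro ⟨⟨T, j, x⟩, hsize, hT, hq⟩
    have hjx : j ≠ x := hT.fst_ne_snd_of_mem_occCorners (by simp only at hsize ⊢; omega)
      hq.mem_occCorners
    apply Subtype.ext
    dsimp only
    rw [rowLen_eraseCross hT hq hjx, succAbove_predAbove hjx.symm, insertCross_eraseCross]
  right_inv := by
    rintro ⟨⟨T, t⟩, hsize, hT, ht⟩
    apply Subtype.ext
    dsimp only
    rw [eraseCross_insertCross, predAbove_succAbove]

/-- `ρ = true` stands for the paper's `a`: the corner lies above the diagonal. -/
def orient (ρ : Bool) (q : ℕ × ℕ) : ℕ × ℕ := if decide (q.1 < q.2) = ρ then q else q.swap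

lemma orient_decide (q : ℕ × ℕ) : orient (decide (q.1 < q.2)) q = q := if_pos rfl

lemma orient_swap {q : ℕ × ℕ} (h : q.1 ≠ q.2) (ρ : Bool) : orient ρ q.swap = orient ρ q := by
  obtain ⟨a, b⟩ := q
  unfold orient
  cases ρ <;> simp only [Prod.swap_prod_mk] <;> split_ifs <;> simp_all <;> omega

lemma decide_orient {q : ℕ × ℕ} (h : q.1 ≠ q.2) (ρ : Bool) :
    decide ((orient ρ q).1 < (orient ρ q).2) = ρ := by
  obtain ⟨a, b⟩ := q
  unfold orient
  cases ρ <;> split_ifs <;> simp_all <;> omega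

lemma orient_eq_or (ρ : Bool) (q : ℕ × ℕ) : orient ρ q = q ∨ orient ρ q = q.swap := by
  unfold orient; split_ifs <;> simp

open Classical in
noncomputable def lonelyOf (T : TreeLikeTableau) (p : ℕ × ℕ) : ℕ × ℕ :=
  if T.IsLonelyCorner p.1 p.2 then p else p.swap

section Lonely

variable {T : TreeLikeTableau} {p : ℕ × ℕ}

lemma lonelyOf_eq_or (T : TreeLikeTableau) (p : ℕ × ℕ) : lonelyOf T p = p ∨ lonelyOf T p = p.swap := by
  unfold lonelyOf; split_ifs <;> simp

lemma isLonelyCorner_lonelyOf (hT : T.IsSymmetric) (hp : p ∈ T.occCorners) (hne : p.1 ≠ p.2) :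
    T.IsLonelyCorner (lonelyOf T p).1 (lonelyOf T p).2 := by
  unfold lonelyOf
  split_ifs with h
  · exact h
  · exact (hT.isLonelyCorner_swap_iff hp hne).mpr h

lemma lonelyOf_orient (hT : T.IsSymmetric) (hq : T.IsLonelyCorner p.1 p.2) (hne : p.1 ≠ p.2)
    (ρ : Bool) : lonelyOf T (orient ρ p) = p := by
  rcases orient_eq_or ρ p with h | h <;> rw [h, lonelyOf]
  · exact if_pos hq
  · rw [Prod.fst_swap, Prod.snd_swap,
      if_neg fun h => (hT.isLonelyCorner_swap_iff hq.mem_occCorners hne).mp h hq, Prod.swap_swap]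

end Lonely

noncomputable def occCornerEquiv {k : ℕ} (hk : k ≠ 1) :
    {y : TreeLikeTableau × ℕ × ℕ // y.1.size = k ∧ y.1.IsSymmetric ∧ y.2 ∈ y.1.occCorners} ≃
      {y : TreeLikeTableau × ℕ × ℕ //
        y.1.size = k ∧ y.1.IsSymmetric ∧ y.1.IsLonelyCorner y.2.1 y.2.2} × Bool where
  toFun y :=
    have hne := y.2.2.1.fst_ne_snd_of_mem_occCorners (by rw [y.2.1]; exact hk) y.2.2.2
    (⟨(y.1.1, lonelyOf y.1.1 y.1.2), y.2.1, y.2.2.1, isLonelyCorner_lonelyOf y.2.2.1 y.2.2.2 hne⟩,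
      decide (y.1.2.1 < y.1.2.2))
  invFun z :=
    ⟨(z.1.1.1, orient z.2 z.1.1.2), z.1.2.1, z.1.2.2.1, by
      rcases orient_eq_or z.2 z.1.1.2 with h | h <;> rw [h]
      · exact z.1.2.2.2.mem_occCorners
      · exact z.1.2.2.1.swap_mem_occCorners z.1.2.2.2.mem_occCorners⟩
  left_inv := by
    rintro ⟨⟨T, p⟩, hsize, hT, hp⟩
    have hne := hT.fst_ne_snd_of_mem_occCorners (hsize ▸ hk) hp
    apply Subtype.ext
    dsimp only
    rcases lonelyOf_eq_or T p with h | h <;> rw [h]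
    · rw [orient_decide]
    · rw [orient_swap hne, orient_decide]
  right_inv := by
    rintro ⟨⟨⟨T, q⟩, hsize, hT, hq⟩, ρ⟩
    have hne : q.1 ≠ q.2 := hT.fst_ne_snd_of_mem_occCorners (hsize ▸ hk) hq.mem_occCorners
    refine Prod.ext (Subtype.ext ?_) (decide_orient hne ρ)
    dsimp only
    rw [lonelyOf_orient hT hq hne]

def succRowEquiv {n : ℕ} (hn : 1 ≤ n) :
    {z : TreeLikeTableau × ℕ //
        z.1.size = 2 * n - 1 ∧ z.1.IsSymmetric ∧ z.2 < z.1.shape.colLen 0} × Bool ≃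
      {y : TreeLikeTableau × ℕ × Bool //
        y.1.size = 2 * n - 1 ∧ y.1.IsSymmetric ∧ y.2.1 ∈ Finset.Icc 1 n} where
  toFun z := ⟨(z.1.1.1, z.1.1.2 + 1, z.2), z.1.2.1, z.1.2.2.1, by
    have := z.1.2.2.1.colLen_zero_eq hn z.1.2.1
    have := z.1.2.2.2
    simp only [Finset.mem_Icc]
    omega⟩
  invFun y := (⟨(y.1.1, y.1.2.1 - 1), y.2.1, y.2.2.1, by
    have := y.2.2.1.colLen_zero_eq hn y.2.1
    have := Finset.mem_Icc.mp y.2.2.2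
    dsimp only
    omega⟩, y.1.2.2)
  left_inv := by
    rintro ⟨⟨⟨T, t⟩, h⟩, ρ⟩
    simp
  right_inv := by
    rintro ⟨⟨T, i, ρ⟩, hsize, hT, hi⟩
    have hi1 : 1 ≤ i := (Finset.mem_Icc.mp hi).1
    simp only [Subtype.mk.injEq, Prod.mk.injEq, true_and, and_true]
    omega

end TreeLikeTableau

/-- There is a bijection between pairs `(T, occupied corner of T)` with `T` a
symmetric tree-like tableau of size `2n+1`, and triples `(T', i, ρ)` with `T'`
a symmetric tree-like tableau of size `2n-1`, `i ∈ {1,…,n}` and `ρ ∈ {a, b}`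
(realized as `Bool`). -/
theorem occupied_corners_bijection_symmetric (n : ℕ) (hn : 1 ≤ n) :
    Nonempty
      ({x : TreeLikeTableau × (ℕ × ℕ) //
          x.1.size = 2 * n + 1 ∧ x.1.IsSymmetric ∧ x.2 ∈ x.1.occCorners} ≃
       {y : TreeLikeTableau × ℕ × Bool //
          y.1.size = 2 * n - 1 ∧ y.1.IsSymmetric ∧ y.2.1 ∈ Finset.Icc 1 n}) :=
  ⟨(TreeLikeTableau.occCornerEquiv (by omega)).trans
    (((TreeLikeTableau.eraseCrossEquiv (by omega)).prodCongr (Equiv.refl Bool)).trans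
      (TreeLikeTableau.succRowEquiv hn))⟩
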